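/- Let ω ∈ K[x₁,x₂] be monic in x₂, ρ ∈ K[x₁,x₂], and let I ⊂ K[x₁,x₂,x₃] be an ideal containing ω and (∂ω/∂x₂)·x₃ − ρ. Suppose y ∈ ℂ̄[[x₁−α]] satisfies ω(x₁, y) ≡ 0 and ∂ω/∂x₂(x₁, y) is not identically zero, and set z = ρ(x₁,y)/∂ω/∂x₂(x₁,y). Then for every h ∈ I ∩ K[x₁,x₂,x₃] with the property that I ∩ K[x₁,x₂] = (ω), we have h(x₁, y, z) = 0 in the fraction field of ℂ̄[[x₁−α]]. -/

import Mathlib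

open Polynomial

noncomputable def d2 {K : Type} [CommRing K] (ω : Polynomial (Polynomial K)) :
    Polynomial (Polynomial K) :=
  Polynomial.derivative ω

/-- The inclusion `K[x₁][x₂] → K[x₁,x₂,x₃]` sending `x₁ ↦ X 0`, `x₂ ↦ X 1`. -/
noncomputable def toMv3 {K : Type} [CommRing K] :
    Polynomial (Polynomial K) →+* MvPolynomial (Fin 3) K :=
  Polynomial.eval₂RingHom
    (Polynomial.eval₂RingHom (MvPolynomial.C : K →+* MvPolynomial (Fin 3) K)
      (MvPolynomial.X 0))
    (MvPolynomial.X 1)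

/-- Substitution `x₁ ↦ α + t`, `x₂ ↦ y` of a bivariate polynomial into `K[[t]]`. -/
noncomputable def substSeries {K : Type} [CommRing K] (α : K) (y : PowerSeries K)
    (p : Polynomial (Polynomial K)) : PowerSeries K :=
  Polynomial.eval₂
    (Polynomial.aeval (PowerSeries.X + PowerSeries.C (R := K) α) :
      Polynomial K →ₐ[K] PowerSeries K).toRingHom y p

/-!
Pseudo-divide `h` by `c·x₃ − ρ` with respect to `x₃`, where `c = ∂ω/∂x₂`: this gives
`c^m · h = u · (c·x₃ − ρ) + r` with `r` free of `x₃`. The remainder `r` lies in `I`, hence is a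
multiple of `ω`, so it vanishes at `(x₁, y)`. The substitution `x₃ ↦ ρ(x₁,y)/c(x₁,y)` kills
`c·x₃ − ρ`, leaving `c(x₁,y)^m · h(x₁,y,z) = 0` in the field of Laurent series, where
`c(x₁,y) ≠ 0`.
-/

section toMv3

variable {K : Type} [CommRing K]

@[simp]
lemma toMv3_C_C (a : K) : toMv3 (C (C a)) = MvPolynomial.C a := by
  simp [toMv3]

@[simp]
lemma toMv3_C_X : toMv3 (C (X : K[X])) = MvPolynomial.X 0 := by
  simp [toMv3]

@[simp]
lemma toMv3_X : toMv3 (X : K[X][X]) = MvPolynomial.X 1 := by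
  simp [toMv3]

lemma exists_pow_mul_eq_mul_add_toMv3 (c ρ : K[X][X]) (h : MvPolynomial (Fin 3) K) :
    ∃ (m : ℕ) (u : MvPolynomial (Fin 3) K) (r : K[X][X]),
      toMv3 c ^ m * h = u * (toMv3 c * MvPolynomial.X 2 - toMv3 ρ) + toMv3 r := by
  induction h using MvPolynomial.induction_on with
  | C a => exact ⟨0, 0, C (C a), by simp⟩
  | add p q hp hq =>
    obtain ⟨m, u, r, hm⟩ := hp
    obtain ⟨n, v, s, hn⟩ := hq
    refine ⟨m + n, toMv3 c ^ n * u + toMv3 c ^ m * v, c ^ n * r + c ^ m * s, ?_⟩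
    simp only [map_add, map_mul, map_pow]
    linear_combination toMv3 c ^ n * hm + toMv3 c ^ m * hn
  | mul_X p i hp =>
    obtain ⟨m, u, r, hm⟩ := hp
    obtain rfl | rfl | rfl : i = 0 ∨ i = 1 ∨ i = 2 := by omega
    · exact ⟨m, u * MvPolynomial.X 0, r * C X, by
        rw [map_mul, toMv3_C_X]; linear_combination MvPolynomial.X 0 * hm⟩
    · exact ⟨m, u * MvPolynomial.X 1, r * X, by
        rw [map_mul, toMv3_X]; linear_combination MvPolynomial.X 1 * hm⟩
    · -- `c·x₃ = (c·x₃ − ρ) + ρ` trades one factor `x₃` for one more power of `c`.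
      exact ⟨m + 1, toMv3 c * MvPolynomial.X 2 * u + toMv3 r, r * ρ, by
        rw [map_mul, pow_succ]; linear_combination toMv3 c * MvPolynomial.X 2 * hm⟩

lemma aeval_toMv3 {L : Type} [CommRing L] [Algebra K L] (f : Fin 3 → L) (p : K[X][X]) :
    MvPolynomial.aeval f (toMv3 p) = p.eval₂ (Polynomial.aeval (f 0)).toRingHom (f 1) := by
  have : ((MvPolynomial.aeval f).toRingHom.comp toMv3 : K[X][X] →+* L) =
      eval₂RingHom (Polynomial.aeval (f 0)).toRingHom (f 1) := by
    ext <;> simp [toMv3]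
  exact RingHom.congr_fun this p

end toMv3

lemma algebraMap_substSeries {K : Type} [CommRing K] (α : K) (y : PowerSeries K) (p : K[X][X]) :
    algebraMap (PowerSeries K) (LaurentSeries K) (substSeries α y p) =
      p.eval₂ (Polynomial.aeval (algebraMap (PowerSeries K) (LaurentSeries K)
        (PowerSeries.X + PowerSeries.C α))).toRingHom
        (algebraMap (PowerSeries K) (LaurentSeries K) y) := by
  simp only [substSeries, hom_eval₂]
  congr 1
  refine Polynomial.ringHom_ext (fun a => ?_) (by simp)
  simp [HahnSeries.algebraMap_apply', PowerSeries.algebraMap_eq]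

lemma substSeries_eq_zero_of_dvd {K : Type} [CommRing K] {α : K} {y : PowerSeries K}
    {ω r : K[X][X]} (hω : substSeries α y ω = 0) (hr : ω ∣ r) : substSeries α y r = 0 := by
  obtain ⟨q, rfl⟩ := hr
  unfold substSeries at *
  rw [eval₂_mul, hω, zero_mul]

theorem branch_lifts_to_ideal_zero_general
    (K : Type) [Field K]
    (ω ρ : Polynomial (Polynomial K))
    (I : Ideal (MvPolynomial (Fin 3) K))
    (hIrel : toMv3 (d2 ω) * MvPolynomial.X 2 - toMv3 ρ ∈ I)
    (hcap : ∀ f : Polynomial (Polynomial K), toMv3 f ∈ I ↔ ω ∣ f)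
    (α : K) (y : PowerSeries K)
    (hω : substSeries α y ω = 0)
    (hd : substSeries α y (d2 ω) ≠ 0)
    (h : MvPolynomial (Fin 3) K) (hh : h ∈ I) :
    MvPolynomial.aeval
        (fun i : Fin 3 =>
          if i = 0 then
            algebraMap (PowerSeries K) (LaurentSeries K) (PowerSeries.X + PowerSeries.C (R := K) α)
          else if i = 1 then algebraMap (PowerSeries K) (LaurentSeries K) y
          else
            algebraMap (PowerSeries K) (LaurentSeries K) (substSeries α y ρ) /
              algebraMap (PowerSeries K) (LaurentSeries K) (substSeries α y (d2 ω)))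
        h = 0 := by
  set A := algebraMap (PowerSeries K) (LaurentSeries K)
  set φ := MvPolynomial.aeval (R := K) (fun i : Fin 3 =>
    if i = 0 then A (PowerSeries.X + PowerSeries.C α) else if i = 1 then A y
    else A (substSeries α y ρ) / A (substSeries α y (d2 ω)))
  have hφ (p : K[X][X]) : φ (toMv3 p) = A (substSeries α y p) := by
    simp [φ, A, aeval_toMv3, algebraMap_substSeries]
  have hA : A (substSeries α y (d2 ω)) ≠ 0 :=
    (map_ne_zero_iff _ (IsFractionRing.injective _ _)).2 hd
  have hrel : φ (toMv3 (d2 ω) * MvPolynomial.X 2 - toMv3 ρ) = 0 := by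
    rw [map_sub, map_mul, hφ, hφ]
    simp [φ, mul_div_cancel₀ _ hA]
  obtain ⟨m, u, r, hdiv⟩ := exists_pow_mul_eq_mul_add_toMv3 (d2 ω) ρ h
  have hr : substSeries α y r = 0 := by
    refine substSeries_eq_zero_of_dvd hω ((hcap r).1 ?_)
    rw [eq_sub_of_add_eq' hdiv.symm]
    exact sub_mem (I.mul_mem_left _ hh) (I.mul_mem_left _ hIrel)
  have hprod : A (substSeries α y (d2 ω)) ^ m * φ h = 0 := by
    simpa [hrel, hφ, hr] using congrArg φ hdiv
  exact (mul_eq_zero.1 hprod).resolve_left (pow_ne_zero _ hA)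

/-- Let `ω ∈ K[x₁,x₂]` be monic in `x₂`, `ρ ∈ K[x₁,x₂]`, and let
`I ⊆ K[x₁,x₂,x₃]` be an ideal containing `ω` and `(∂ω/∂x₂)·x₃ − ρ`, with
`I ∩ K[x₁,x₂] = (ω)`.  If `y ∈ K[[x₁−α]]` satisfies `ω(x₁,y) = 0` and `∂ω/∂x₂(x₁,y) ≠ 0`,
and `z = ρ(x₁,y)/(∂ω/∂x₂)(x₁,y)` in the fraction field (Laurent series), then every `h ∈ I`
satisfies `h(x₁, y, z) = 0` there. -/
theorem branch_lifts_to_ideal_zero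
    (K : Type) [Field K] [IsAlgClosed K] [CharZero K]
    (ω ρ : Polynomial (Polynomial K)) (hmonic : ω.Monic)
    (I : Ideal (MvPolynomial (Fin 3) K))
    (hIω : toMv3 ω ∈ I)
    (hIrel : toMv3 (d2 ω) * MvPolynomial.X 2 - toMv3 ρ ∈ I)
    (hcap : ∀ f : Polynomial (Polynomial K), toMv3 f ∈ I ↔ ω ∣ f)
    (α : K) (y : PowerSeries K)
    (hω : substSeries α y ω = 0)
    (hd : substSeries α y (d2 ω) ≠ 0)
    (h : MvPolynomial (Fin 3) K) (hh : h ∈ I) :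
    MvPolynomial.aeval
        (fun i : Fin 3 =>
          if i = 0 then
            algebraMap (PowerSeries K) (LaurentSeries K) (PowerSeries.X + PowerSeries.C (R := K) α)
          else if i = 1 then algebraMap (PowerSeries K) (LaurentSeries K) y
          else
            algebraMap (PowerSeries K) (LaurentSeries K) (substSeries α y ρ) /
              algebraMap (PowerSeries K) (LaurentSeries K) (substSeries α y (d2 ω)))
        h = 0 :=
  branch_lifts_to_ideal_zero_general K ω ρ I hIrel hcap α y hω hd h hh
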